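/- For m > 0, the Schwarzschild isoperimetric profile φ_m is strictly convex on the interval [36π m², ∞). -/

import Mathlib

/-- Area of the coordinate sphere of radius `r` in the Schwarzschild manifold of
mass `m`, in isotropic coordinates: `A_m(r) = 4π r² (1 + m/(2r))⁴`. -/
noncomputable def schwA (m r : ℝ) : ℝ := 4 * Real.pi * r ^ 2 * (1 + m / (2 * r)) ^ 4

/-- Volume enclosed between the horizon `r = m/2` and the coordinate sphere of radius `r`
in the Schwarzschild manifold of mass `m`:
`V_m(r) = ∫_{m/2}^r 4π ρ² (1 + m/(2ρ))⁶ dρ`. -/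
noncomputable def schwV (m r : ℝ) : ℝ :=
  ∫ ρ in (m / 2)..r, 4 * Real.pi * ρ ^ 2 * (1 + m / (2 * ρ)) ^ 6

/-- The Schwarzschild isoperimetric profile of mass `m`: `φ_m = V_m ∘ A_m⁻¹`, where
`A_m⁻¹ : [16πm², ∞) → [m/2, ∞)` is the inverse of the (bijective, strictly increasing)
area function `A_m : [m/2, ∞) → [16πm², ∞)`. -/
noncomputable def schwPhi (m A : ℝ) : ℝ :=
  schwV m (Function.invFunOn (schwA m) (Set.Ici (m / 2)) A)

/-!
Write `r = A_m⁻¹(A)`. By the chain rule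
`φ_m'(A) = V_m'(r) / A_m'(r) = (2r + m)³ / (8r(2r - m))`, and `A_m⁻¹` is increasing, so it
suffices that this slope is increasing in `r`. Its `r`-derivative has the sign of
`4r² - 8mr + m²`, which is positive beyond the root `r* = (2 + √3)m/2`, and `A_m(r*) = 36πm²`
because `(2r* + m)² = 12mr*`.
-/

open Real Set

/-- The inverse of `schwA m` on `[m/2, ∞)`, obtained from `(2r + m)² = 2r √(A/π)`. -/
noncomputable def schwRadius (m A : ℝ) : ℝ :=
  (√(A / π) - 2 * m + √(√(A / π) * (√(A / π) - 4 * m))) / 4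

noncomputable def schwSlope (m r : ℝ) : ℝ := (2 * r + m) ^ 3 / (8 * r * (2 * r - m))

noncomputable def schwConvexRadius (m : ℝ) : ℝ := (2 + √3) * m / 2

section

variable {m r A : ℝ}

lemma schwA_eq_div (m : ℝ) (hr : r ≠ 0) : schwA m r = π * (2 * r + m) ^ 4 / (4 * r ^ 2) := by
  unfold schwA; field_simp; ring

lemma schwA_half (hm : m ≠ 0) : schwA m (m / 2) = 16 * π * m ^ 2 := by
  rw [schwA_eq_div m (by positivity)]; field_simp; ring

lemma schwA_schwConvexRadius (hm : m ≠ 0) : schwA m (schwConvexRadius m) = 36 * π * m ^ 2 := by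
  have h3 : √3 ^ 2 = 3 := Real.sq_sqrt (by norm_num)
  have hsq : (2 * schwConvexRadius m + m) ^ 2 = 12 * m * schwConvexRadius m := by
    unfold schwConvexRadius; linear_combination m ^ 2 * h3
  have hr : schwConvexRadius m ≠ 0 := by unfold schwConvexRadius; positivity
  rw [schwA_eq_div m hr, show (2 * schwConvexRadius m + m) ^ 4 = (12 * m * schwConvexRadius m) ^ 2
    by rw [← hsq]; ring]
  field_simp; ring

lemma half_le_schwConvexRadius (hm : 0 ≤ m) : m / 2 ≤ schwConvexRadius m := by
  unfold schwConvexRadius; nlinarith [Real.sqrt_nonneg 3]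

lemma four_mul_le_sqrt_div_pi (hA : 16 * π * m ^ 2 ≤ A) : 4 * m ≤ √(A / π) :=
  Real.le_sqrt_of_sq_le <| (le_div_iff₀ Real.pi_pos).mpr (by linarith)

lemma schwRadius_schwA (hm : 0 < m) (hr : m / 2 ≤ r) : schwRadius m (schwA m r) = r := by
  have hr0 : 0 < r := by linarith
  have hs : √(schwA m r / π) = (2 * r + m) ^ 2 / (2 * r) := by
    rw [schwA_eq_div m hr0.ne', ← Real.sqrt_sq (by positivity : 0 ≤ (2 * r + m) ^ 2 / (2 * r))]
    congr 1; field_simp; ring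
  have ht : √((2 * r + m) ^ 2 / (2 * r) * ((2 * r + m) ^ 2 / (2 * r) - 4 * m))
      = (2 * r + m) * (2 * r - m) / (2 * r) := by
    have : 0 ≤ 2 * r - m := by linarith
    rw [← Real.sqrt_sq (by positivity : 0 ≤ (2 * r + m) * (2 * r - m) / (2 * r))]
    congr 1; field_simp; ring
  rw [schwRadius, hs, ht]; field_simp; ring

lemma half_le_schwRadius (hA : 16 * π * m ^ 2 ≤ A) : m / 2 ≤ schwRadius m A := by
  have := four_mul_le_sqrt_div_pi hA
  have := Real.sqrt_nonneg (√(A / π) * (√(A / π) - 4 * m))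
  unfold schwRadius; linarith

lemma schwA_schwRadius (hm : 0 < m) (hA : 16 * π * m ^ 2 ≤ A) :
    schwA m (schwRadius m A) = A := by
  set s := √(A / π)
  have hs4 : 4 * m ≤ s := four_mul_le_sqrt_div_pi hA
  have hss : s ^ 2 = A / π := Real.sq_sqrt (div_nonneg (by nlinarith [Real.pi_pos]) Real.pi_pos.le)
  have ht : √(s * (s - 4 * m)) ^ 2 = s * (s - 4 * m) := Real.sq_sqrt (by nlinarith)
  have hr : 0 < schwRadius m A := by linarith [half_le_schwRadius hA]
  have hkey : (2 * schwRadius m A + m) ^ 2 = 2 * s * schwRadius m A := by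
    unfold schwRadius; linear_combination ht / 4
  rw [schwA_eq_div m hr.ne', show (2 * schwRadius m A + m) ^ 4 = (2 * s * schwRadius m A) ^ 2
    by rw [← hkey]; ring, mul_pow, mul_pow, hss]
  field_simp; ring

lemma schwPhi_eq (hm : 0 < m) (hA : 16 * π * m ^ 2 ≤ A) :
    schwPhi m A = schwV m (schwRadius m A) := by
  have hex : ∃ r ∈ Ici (m / 2), schwA m r = A :=
    ⟨_, half_le_schwRadius hA, schwA_schwRadius hm hA⟩
  have hinv := schwRadius_schwA hm (mem_Ici.mp (Function.invFunOn_mem hex))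
  rw [Function.invFunOn_eq hex] at hinv
  rw [schwPhi, hinv]

lemma continuous_schwRadius (m : ℝ) : Continuous (schwRadius m) := by
  unfold schwRadius; fun_prop

lemma strictMonoOn_schwRadius (m : ℝ) :
    StrictMonoOn (schwRadius m) (Ici (16 * π * m ^ 2)) := by
  intro A hA B hB hAB
  have hA0 : 0 ≤ A := (by positivity : (0 : ℝ) ≤ 16 * π * m ^ 2).trans hA
  have hsA := four_mul_le_sqrt_div_pi hA
  have hs : √(A / π) < √(B / π) :=
    Real.sqrt_lt_sqrt (div_nonneg hA0 Real.pi_pos.le)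
      (div_lt_div_of_pos_right hAB Real.pi_pos)
  have ht : √(√(A / π) * (√(A / π) - 4 * m)) ≤ √(√(B / π) * (√(B / π) - 4 * m)) :=
    Real.sqrt_le_sqrt (by nlinarith [Real.sqrt_nonneg (A / π)])
  unfold schwRadius; linarith

lemma half_lt_schwRadius (hm : 0 < m) (hA : 16 * π * m ^ 2 < A) : m / 2 < schwRadius m A := by
  have := strictMonoOn_schwRadius m self_mem_Ici (mem_Ici.mpr hA.le) hA
  rwa [← schwA_half hm.ne', schwRadius_schwA hm le_rfl] at this

lemma hasDerivAt_schwA (m : ℝ) (hr : r ≠ 0) :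
    HasDerivAt (schwA m) (π * (2 * r + m) ^ 3 * (2 * r - m) / (2 * r ^ 3)) r := by
  have h2r : 2 * r ≠ 0 := by positivity
  have hq : HasDerivAt (fun x => 1 + m / (2 * x)) (-(m * 2) / (2 * r) ^ 2) r := by
    simpa using ((hasDerivAt_const r m).div ((hasDerivAt_id r).const_mul 2) h2r).const_add 1
  have hsq : HasDerivAt (fun x => 4 * π * x ^ 2) (4 * π * (2 * r)) r := by
    simpa using (hasDerivAt_pow 2 r).const_mul (4 * π)
  refine (hsq.fun_mul (hq.fun_pow 4)).congr_deriv ?_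
  norm_num; field_simp; ring

lemma hasDerivAt_schwV (hm : 0 < m) (hr : 0 < r) :
    HasDerivAt (schwV m) (4 * π * r ^ 2 * (1 + m / (2 * r)) ^ 6) r := by
  have hcont : ContinuousOn (fun ρ => 4 * π * ρ ^ 2 * (1 + m / (2 * ρ)) ^ 6) (Ioi 0) := by
    intro x hx
    have : 2 * x ≠ 0 := by simp [(mem_Ioi.mp hx).ne']
    fun_prop (disch := assumption)
  have hsub : uIcc (m / 2) r ⊆ Ioi 0 := fun x hx =>
    lt_of_lt_of_le (lt_min (by positivity) hr) hx.1
  exact intervalIntegral.integral_hasDerivAt_right ((hcont.mono hsub).intervalIntegrable)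
    (hcont.stronglyMeasurableAtFilter isOpen_Ioi r hr) (hcont.continuousAt (Ioi_mem_nhds hr))

lemma hasDerivAt_schwPhi (hm : 0 < m) (hA : 16 * π * m ^ 2 < A) :
    HasDerivAt (schwPhi m) (schwSlope m (schwRadius m A)) A := by
  set r := schwRadius m A
  have hr := half_lt_schwRadius hm hA
  have hr0 : 0 < r := by linarith
  have hd : 0 < π * (2 * r + m) ^ 3 * (2 * r - m) / (2 * r ^ 3) := by
    have : 0 < 2 * r - m := by linarith
    positivity
  have hR : HasDerivAt (schwRadius m) (π * (2 * r + m) ^ 3 * (2 * r - m) / (2 * r ^ 3))⁻¹ A :=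
    (hasDerivAt_schwA m hr0.ne').of_local_left_inverse (continuous_schwRadius m).continuousAt
      hd.ne' <| eventually_gt_nhds hA |>.mono fun B hB => schwA_schwRadius hm hB.le
  have hPhi : schwV m ∘ schwRadius m =ᶠ[nhds A] schwPhi m :=
    eventually_gt_nhds hA |>.mono fun B hB => (schwPhi_eq hm hB.le).symm
  refine (((hasDerivAt_schwV hm hr0).comp A hR).congr_of_eventuallyEq hPhi.symm).congr_deriv ?_
  have : 2 * r - m ≠ 0 := by linarith
  unfold schwSlope; field_simp; ring

lemma hasDerivAt_schwSlope (m : ℝ) (hr : r ≠ 0) (hrm : 2 * r - m ≠ 0) :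
    HasDerivAt (schwSlope m)
      (8 * (2 * r + m) ^ 2 * (4 * r ^ 2 - 8 * m * r + m ^ 2) / (8 * r * (2 * r - m)) ^ 2) r := by
  have hnum : HasDerivAt (fun x => (2 * x + m) ^ 3) (3 * (2 * r + m) ^ 2 * 2) r := by
    simpa using (((hasDerivAt_id r).const_mul 2).add_const m).fun_pow 3
  have hden : HasDerivAt (fun x => 8 * x * (2 * x - m)) (8 * (2 * r - m) + 8 * r * 2) r := by
    simpa using
      ((hasDerivAt_id r).const_mul 8).fun_mul (((hasDerivAt_id r).const_mul 2).sub_const m)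
  exact (hnum.div hden (by positivity)).congr_deriv (by ring)

lemma strictMonoOn_schwSlope (hm : 0 < m) :
    StrictMonoOn (schwSlope m) (Ici (schwConvexRadius m)) := by
  have hhalf : m / 2 < schwConvexRadius m := by
    unfold schwConvexRadius; nlinarith [Real.sqrt_nonneg 3]
  have hne : ∀ x ∈ Ici (schwConvexRadius m), x ≠ 0 ∧ 2 * x - m ≠ 0 := fun x hx => by
    have := mem_Ici.mp hx
    constructor <;> linarith
  refine strictMonoOn_of_deriv_pos (convex_Ici _)
    (fun x hx => (hasDerivAt_schwSlope m (hne x hx).1 (hne x hx).2).continuousAt.continuousWithinAt)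
    fun x hx => ?_
  rw [interior_Ici] at hx
  have hx' : schwConvexRadius m < x := hx
  obtain ⟨hx0, hxm⟩ := hne x (mem_Ici_of_Ioi hx)
  rw [(hasDerivAt_schwSlope m hx0 hxm).deriv]
  have h3 : √3 ^ 2 = 3 := Real.sq_sqrt (by norm_num)
  -- `4x² - 8mx + m² = 4 (x - r*) (x - (2 - √3) m / 2)`, and both factors are positive
  have hq : 0 < 4 * x ^ 2 - 8 * m * x + m ^ 2 := by
    unfold schwConvexRadius at hx'
    nlinarith [mul_pos (sub_pos.mpr hx') (mul_pos hm (Real.sqrt_pos.mpr three_pos))]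
  have : 0 < 2 * x + m := by linarith
  positivity

end

/-- For `m > 0`, `φ_m` is strictly convex on `[36πm², ∞)`. -/
theorem schwPhi_strictConvexOn (m : ℝ) (hm : 0 < m) :
    StrictConvexOn ℝ (Set.Ici (36 * Real.pi * m ^ 2)) (schwPhi m) := by
  have h16 : ∀ A ∈ Ici (36 * π * m ^ 2), 16 * π * m ^ 2 < A := fun A hA => by
    nlinarith [mem_Ici.mp hA, mul_pos Real.pi_pos (pow_pos hm 2)]
  have hR16 : Ici (36 * π * m ^ 2) ⊆ Ici (16 * π * m ^ 2) := fun A hA => (h16 A hA).le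
  have hmaps : MapsTo (schwRadius m) (Ioi (36 * π * m ^ 2)) (Ici (schwConvexRadius m)) :=
    fun A hA => by
      rw [mem_Ici, ← schwRadius_schwA hm (half_le_schwConvexRadius hm.le),
        schwA_schwConvexRadius hm.ne']
      exact (strictMonoOn_schwRadius m).monotoneOn (hR16 self_mem_Ici) (hR16 (mem_Ici_of_Ioi hA))
        (mem_Ioi.mp hA).le
  refine StrictMonoOn.strictConvexOn_of_deriv (convex_Ici _)
    (fun A hA => (hasDerivAt_schwPhi hm (h16 A hA)).continuousAt.continuousWithinAt) ?_
  rw [interior_Ici]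
  refine ((strictMonoOn_schwSlope hm).comp
    ((strictMonoOn_schwRadius m).mono (Ioi_subset_Ici_self.trans hR16)) hmaps).congr ?_
  exact fun A hA => (hasDerivAt_schwPhi hm (h16 A (mem_Ici_of_Ioi hA))).deriv.symm
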